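/- Let Φ = (G, φ) be a T-gain graph on n vertices with at least one edge. For r ≥ 2 and 0 < s, t < ∞ with 1/s + 1/t = 1, and for each vertex index p: (Ω_p(|A(Φ)|^r))^t / (Ω_p(|A(Φ)|^{s(r-1)+1}))^{t/s} ≤ E_Φ(v_p), where Ω_p(B) denotes the (p,p)-entry of B. -/

import Mathlib

open Matrix BigOperators
open scoped Classical ComplexOrder

noncomputable def Matrix.PosSemidef.sqrt {n 𝕜 : Type*} [Fintype n] [DecidableEq n] [RCLike 𝕜]
    {A : Matrix n n 𝕜} (hA : A.PosSemidef) : Matrix n n 𝕜 :=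
  hA.isHermitian.eigenvectorUnitary.1 * diagonal ((↑) ∘ (√·) ∘ hA.isHermitian.eigenvalues) *
  (star hA.isHermitian.eigenvectorUnitary : Matrix n n 𝕜)

theorem Matrix.PosSemidef.isHermitian_sqrt {n 𝕜 : Type*} [Fintype n] [DecidableEq n] [RCLike 𝕜]
    {A : Matrix n n 𝕜} (hA : A.PosSemidef) : hA.sqrt.IsHermitian := by
  unfold Matrix.PosSemidef.sqrt
  simp only [IsHermitian, conjTranspose_mul, diagonal_conjTranspose, Matrix.mul_assoc]
  simp only [Function.comp_def, star_eq_conjTranspose, conjTranspose_conjTranspose]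
  congr 3
  funext i
  simp
/-- A complex unit gain graph (`𝕋`-gain graph) on a finite vertex type `V`. -/
structure TGainGraph (V : Type*) [Fintype V] [DecidableEq V] where
  G : SimpleGraph V
  A : Matrix V V ℂ
  herm : A.IsHermitian
  unitGain : ∀ i j, G.Adj i j → ‖A i j‖ = 1
  zeroGain : ∀ i j, ¬ G.Adj i j → A i j = 0

namespace TGainGraph

variable {V : Type*} [Fintype V] [DecidableEq V]

/-- The energy of a `𝕋`-gain graph: sum of absolute values of eigenvalues of `A(Φ)`. -/
noncomputable def energy (Φ : TGainGraph V) : ℝ :=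
  ∑ i, |Φ.herm.eigenvalues i|

/-- `|A(Φ)| = (A(Φ) A(Φ)ᴴ)^{1/2}`. -/
noncomputable def absMatrix (Φ : TGainGraph V) : Matrix V V ℂ :=
  (Matrix.posSemidef_self_mul_conjTranspose Φ.A).sqrt

/-- Energy of a vertex: the `(i,i)` entry of `|A(Φ)|`. -/
noncomputable def vertexEnergy (Φ : TGainGraph V) (i : V) : ℝ :=
  (Φ.absMatrix i i).re

/-- Degree of a vertex in the underlying graph. -/
noncomputable def deg (Φ : TGainGraph V) (i : V) : ℕ := Φ.G.degree i

/-- Maximum vertex degree of the underlying graph. -/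
noncomputable def maxDeg (Φ : TGainGraph V) : ℕ := Φ.G.maxDegree

/-- Spectral radius of `A(Φ)`. -/
noncomputable def specRadius (Φ : TGainGraph V) : ℝ :=
  ⨆ i, |Φ.herm.eigenvalues i|

/-- Switching equivalence of two gain graphs on the same vertex set: same
underlying graph, and adjacency matrices conjugate by a diagonal unitary. -/
def SwitchEquiv (Φ₁ Φ₂ : TGainGraph V) : Prop :=
  Φ₁.G = Φ₂.G ∧ ∃ U : Matrix V V ℂ, U.IsDiag ∧ U ∈ Matrix.unitaryGroup V ℂ ∧
    Φ₁.A = U * Φ₂.A * Uᴴ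

/-- `Φ` switches to the all-ones gain on its underlying graph,
i.e. `Φ ∼ (G, 1)` (equivalently, `Φ` is balanced). -/
def SwitchesToOne (Φ : TGainGraph V) : Prop :=
  ∃ U : Matrix V V ℂ, U.IsDiag ∧ U ∈ Matrix.unitaryGroup V ℂ ∧
    Φ.A = U * (Φ.G.adjMatrix ℂ) * Uᴴ

/-- `Φ ∼ (K_{a,b}, 1)`: the underlying graph is (isomorphic to) the complete
bipartite graph `K_{a,b}` via some bijection `e`, and the gains switch to `1`. -/
def SwitchEquivToCompleteBipartite (Φ : TGainGraph V) (a b : ℕ) : Prop :=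
  (∃ e : V ≃ (Fin a ⊕ Fin b), ∀ i j, Φ.G.Adj i j ↔
      (completeBipartiteGraph (Fin a) (Fin b)).Adj (e i) (e j)) ∧
  SwitchesToOne Φ

/-- The gain of a walk: the product of the gains of its edges in order. -/
noncomputable def walkGain (Φ : TGainGraph V) {u v : V} (w : Φ.G.Walk u v) : ℂ :=
  (w.darts.map (fun d => Φ.A d.fst d.snd)).prod

/-- A gain graph is balanced if every cycle has gain `1`. -/
def Balanced (Φ : TGainGraph V) : Prop :=
  ∀ (u : V) (w : Φ.G.Walk u u), w.IsCycle → Φ.walkGain w = 1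

/-- The restriction of a gain graph to a set of vertices. -/
noncomputable def restrict (Φ : TGainGraph V) (s : Set V) : TGainGraph s where
  G := Φ.G.induce s
  A := Φ.A.submatrix (Subtype.val) (Subtype.val)
  herm := Φ.herm.submatrix _
  unitGain := fun i j h => Φ.unitGain i j h
  zeroGain := fun i j h => Φ.zeroGain i j h

/-- The vertex set of the connected component `c`. -/
def componentSet (Φ : TGainGraph V) (c : Φ.G.ConnectedComponent) : Set V :=
  {v | Φ.G.connectedComponentMk v = c}

/-- Every connected component of `Φ` is either an isolated vertex or a balanced
complete bipartite gain graph `(K_{k,k},1)` with a perfect matching. -/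
def ComponentsBalancedCompleteBipartitePM (Φ : TGainGraph V) : Prop :=
  ∀ c : Φ.G.ConnectedComponent,
    (∀ v ∈ Φ.componentSet c, ∀ w, ¬ Φ.G.Adj v w) ∨
    ∃ k : ℕ, 0 < k ∧
      (Φ.restrict (Φ.componentSet c)).SwitchEquivToCompleteBipartite k k

/-- The matching number of a graph. -/
noncomputable def matchingNumber (G : SimpleGraph V) : ℕ :=
  sSup {k | ∃ M : G.Subgraph, M.IsMatching ∧ M.edgeSet.ncard = k}

/-- The vertex cover number of a graph. -/
noncomputable def coverNumber (G : SimpleGraph V) : ℕ :=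
  sInf {k | ∃ s : Finset V, s.card = k ∧ ∀ i j, G.Adj i j → i ∈ s ∨ j ∈ s}

/-- The number of odd cycles of a graph (counted by their edge sets). -/
noncomputable def oddCycleCount (G : SimpleGraph V) : ℕ :=
  Set.ncard {s : Set (Sym2 V) | ∃ (u : V) (w : G.Walk u u),
    w.IsCycle ∧ Odd w.length ∧ s = {e | e ∈ w.edges}}

end TGainGraph

/-- Real powers of `|A(Φ)|`, defined through the spectral decomposition of the
positive semidefinite matrix `|A(Φ)|` (functional calculus). -/
noncomputable def TGainGraph.absPow {V : Type*} [Fintype V] [DecidableEq V]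
    (Φ : TGainGraph V) (x : ℝ) : Matrix V V ℂ :=
  letI h : (Φ.absMatrix).IsHermitian :=
    (Matrix.posSemidef_self_mul_conjTranspose Φ.A).isHermitian_sqrt
  (h.eigenvectorUnitary : Matrix V V ℂ) *
    Matrix.diagonal (fun i => ((h.eigenvalues i ^ x : ℝ) : ℂ)) *
    (star h.eigenvectorUnitary : Matrix V V ℂ)

/-! Diagonalising `|A(Φ)| = U diag(λ) U*` gives `Ω_p(|A(Φ)|^x) = ∑ i, λ i ^ x * |U p i|²` for
every `x`. Against the weights `λ i * |U p i|²`, whose sum is `E_Φ(v_p)`, the case `x = r` is the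
weighted sum of `λ i ^ (r - 1)`, so the weighted Hölder inequality with exponent `s` bounds it by
`E_Φ(v_p) ^ (1/t) * Ω_p(|A(Φ)|^(s (r - 1) + 1)) ^ (1/s)`. -/

namespace Real

theorem sum_rpow_mul_le_of_holderConjugate {ι : Type*} (S : Finset ι) {x w : ι → ℝ}
    (hx : ∀ i, 0 ≤ x i) (hw : ∀ i, 0 ≤ w i) {p q a : ℝ} (hpq : p.HolderConjugate q)
    (ha : 1 ≤ a) :
    ∑ i ∈ S, x i ^ a * w i ≤
      (∑ i ∈ S, x i * w i) ^ q⁻¹ * (∑ i ∈ S, x i ^ (p * (a - 1) + 1) * w i) ^ p⁻¹ := by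
  have hsplit : ∀ i, x i ^ a * w i = x i * w i * x i ^ (a - 1) := fun i => by
    rw [show a = 1 + (a - 1) by ring, rpow_add_of_nonneg (hx i) zero_le_one (by linarith),
      rpow_one, add_sub_cancel_left]
    ring
  have hpow : ∀ i, x i ^ (p * (a - 1) + 1) * w i = x i * w i * (x i ^ (a - 1)) ^ p := fun i => by
    rw [← rpow_mul (hx i), mul_comm (a - 1),
      rpow_add_of_nonneg (hx i) (mul_nonneg hpq.nonneg (by linarith)) zero_le_one, rpow_one]
    ring
  simp only [hsplit, hpow, ← hpq.one_sub_inv]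
  exact inner_le_weight_mul_Lp_of_nonneg S hpq.lt.le _ _
    (fun i => mul_nonneg (hx i) (hw i)) (fun i => rpow_nonneg (hx i) _)

theorem rpow_sum_rpow_mul_div_le_of_holderConjugate {ι : Type*} (S : Finset ι) {x w : ι → ℝ}
    (hx : ∀ i, 0 ≤ x i) (hw : ∀ i, 0 ≤ w i) {p q a : ℝ} (hpq : p.HolderConjugate q)
    (ha : 1 ≤ a) :
    (∑ i ∈ S, x i ^ a * w i) ^ q / (∑ i ∈ S, x i ^ (p * (a - 1) + 1) * w i) ^ (q / p) ≤
      ∑ i ∈ S, x i * w i := by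
  have hE : 0 ≤ ∑ i ∈ S, x i * w i := Finset.sum_nonneg fun i _ => mul_nonneg (hx i) (hw i)
  have hB : 0 ≤ ∑ i ∈ S, x i ^ (p * (a - 1) + 1) * w i :=
    Finset.sum_nonneg fun i _ => mul_nonneg (rpow_nonneg (hx i) _) (hw i)
  refine div_le_of_le_mul₀ (rpow_nonneg hB _) hE ?_
  calc (∑ i ∈ S, x i ^ a * w i) ^ q
      ≤ ((∑ i ∈ S, x i * w i) ^ q⁻¹ * (∑ i ∈ S, x i ^ (p * (a - 1) + 1) * w i) ^ p⁻¹) ^ q :=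
        rpow_le_rpow (Finset.sum_nonneg fun i _ => mul_nonneg (rpow_nonneg (hx i) _) (hw i))
          (sum_rpow_mul_le_of_holderConjugate S hx hw hpq ha) hpq.symm.nonneg
    _ = (∑ i ∈ S, x i * w i) * (∑ i ∈ S, x i ^ (p * (a - 1) + 1) * w i) ^ (q / p) := by
        rw [mul_rpow (rpow_nonneg hE _) (rpow_nonneg hB _), ← rpow_mul hE, ← rpow_mul hB,
          inv_mul_cancel₀ hpq.symm.ne_zero, rpow_one, inv_mul_eq_div]

end Real

theorem Matrix.PosSemidef.posSemidef_sqrt {n 𝕜 : Type*} [Fintype n] [DecidableEq n] [RCLike 𝕜]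
    {A : Matrix n n 𝕜} (hA : A.PosSemidef) : hA.sqrt.PosSemidef := by
  have hd : (diagonal ((↑) ∘ (√·) ∘ hA.isHermitian.eigenvalues) : Matrix n n 𝕜).PosSemidef :=
    PosSemidef.diagonal fun i => RCLike.ofReal_nonneg.mpr (Real.sqrt_nonneg _)
  simpa [Matrix.PosSemidef.sqrt, star_eq_conjTranspose] using
    hd.mul_mul_conjTranspose_same (hA.isHermitian.eigenvectorUnitary : Matrix n n 𝕜)

theorem Matrix.re_mul_diagonal_mul_star_apply_self {n 𝕜 : Type*} [Fintype n] [DecidableEq n]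
    [RCLike 𝕜] (U : Matrix n n 𝕜) (d : n → ℝ) (p : n) :
    RCLike.re ((U * diagonal (fun i => (d i : 𝕜)) * star U) p p) = ∑ i, d i * ‖U p i‖ ^ 2 := by
  simp only [mul_apply, diagonal_apply, star_apply, mul_ite, mul_zero, Finset.sum_ite_eq',
    Finset.mem_univ, if_true, map_sum]
  refine Finset.sum_congr rfl fun i _ => ?_
  rw [mul_right_comm, RCLike.star_def, RCLike.mul_conj, mul_comm]
  norm_cast

namespace TGainGraph

variable {V : Type*} [Fintype V] [DecidableEq V] (Φ : TGainGraph V)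

theorem posSemidef_absMatrix : Φ.absMatrix.PosSemidef :=
  (posSemidef_self_mul_conjTranspose Φ.A).posSemidef_sqrt

noncomputable def absEigenvalues : V → ℝ :=
  Φ.posSemidef_absMatrix.isHermitian.eigenvalues

noncomputable def spectralWeight (p i : V) : ℝ :=
  ‖(Φ.posSemidef_absMatrix.isHermitian.eigenvectorUnitary : Matrix V V ℂ) p i‖ ^ 2

theorem absEigenvalues_nonneg (i : V) : 0 ≤ Φ.absEigenvalues i :=
  Φ.posSemidef_absMatrix.eigenvalues_nonneg i

theorem spectralWeight_nonneg (p i : V) : 0 ≤ Φ.spectralWeight p i := by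
  unfold spectralWeight
  positivity

theorem re_absPow_apply_self (x : ℝ) (p : V) :
    ((Φ.absPow x) p p).re = ∑ i, Φ.absEigenvalues i ^ x * Φ.spectralWeight p i := by
  unfold absPow
  exact re_mul_diagonal_mul_star_apply_self (𝕜 := ℂ) _ (fun i => Φ.absEigenvalues i ^ x) p

theorem vertexEnergy_eq_sum (p : V) :
    Φ.vertexEnergy p = ∑ i, Φ.absEigenvalues i * Φ.spectralWeight p i := by
  have hspec := Φ.posSemidef_absMatrix.isHermitian.spectral_theorem
  rw [Unitary.conjStarAlgAut_apply] at hspec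
  rw [vertexEnergy, hspec]
  exact re_mul_diagonal_mul_star_apply_self (𝕜 := ℂ) _ Φ.absEigenvalues p

end TGainGraph

open TGainGraph in
theorem holder_lower_bound_vertexEnergy_general {V : Type*} [Fintype V] [DecidableEq V]
    (Φ : TGainGraph V)
    (r : ℕ) (hr : 2 ≤ r) (s t : ℝ) (hs : 0 < s) (ht : 0 < t)
    (hst : 1 / s + 1 / t = 1) (p : V) :
    ((Φ.absPow r) p p).re ^ t / ((Φ.absPow (s * ((r : ℝ) - 1) + 1)) p p).re ^ (t / s)
      ≤ Φ.vertexEnergy p := by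
  have hconj : s.HolderConjugate t := by
    simpa [← one_div, hst] using Real.HolderTriple.of_pos hs ht
  have hr1 : (1 : ℝ) ≤ r := by exact_mod_cast one_le_two.trans hr
  rw [re_absPow_apply_self, re_absPow_apply_self, vertexEnergy_eq_sum]
  exact Real.rpow_sum_rpow_mul_div_le_of_holderConjugate _ Φ.absEigenvalues_nonneg
    (Φ.spectralWeight_nonneg p) hconj hr1

open TGainGraph in
/-- Hölder-type lower bound for the vertex energy: for `r ≥ 2` and conjugate
exponents `s, t`, `Ω_p(|A|^r)^t / Ω_p(|A|^{s(r-1)+1})^{t/s} ≤ E_Φ(v_p)`. -/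
theorem holder_lower_bound_vertexEnergy {V : Type*} [Fintype V] [DecidableEq V]
    (Φ : TGainGraph V) (hE : Φ.G.edgeSet.Nonempty)
    (r : ℕ) (hr : 2 ≤ r) (s t : ℝ) (hs : 0 < s) (ht : 0 < t)
    (hst : 1 / s + 1 / t = 1) (p : V) :
    ((Φ.absPow r) p p).re ^ t / ((Φ.absPow (s * ((r : ℝ) - 1) + 1)) p p).re ^ (t / s)
      ≤ Φ.vertexEnergy p :=
  holder_lower_bound_vertexEnergy_general Φ r hr s t hs ht hst p
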